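/- Let ex, ey, csi ∈ ℝ with csi² = 48·ex, and set G₂ = 12·(13·ex² + 16·ey²), G₃ = 8·(35·ex² + 48·ey²)·ex. (i) For k ∈ {0,1}, the pair (w_k, v_k) with w_k = −2·ex + (−1)^k·i·√3·(3·ex + 4i·ey) and v_k = (3 − (−1)^k·i·√3)·csi·(3·ex + 4i·ey)/2 satisfies v_k² = 4·w_k³ − G₂·w_k − G₃. (ii) Moreover, if ℘ is holomorphic on a connected open set U with (℘')² = 4·℘³ − G₂·℘ − G₃, nonconstant, and ξ* ∈ U satisfies ℘(ξ*) = w₀ and ℘'(ξ*) = v₀, then the function D = csi/2 − [6·csi·(3·ex + 4i·ey)² + (℘ + 2·ex + 3·(3·ex + 4i·ey))·℘'] / [2·((℘ + 2·ex)² + 3·(3·ex + 4i·ey)²)] has a simple pole at ξ* with residue (−1 + i·√3)/2. -/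

import Mathlib

/-! With `t = i√3` and `a = 3·ex + 4i·ey`, the denominator of `D` factors as
`(℘ - w₀)(℘ - w₁)` with `w₀, w₁ = -2·ex ± t·a`, so `(z - ξ*)·D` tends to
`-(6·a²·lim csi·(z - ξ*)/(℘ - w₀) + (w₀ + 2·ex + 3a)·n) / (2(w₀ - w₁))`, where `n`, the order
of the zero of `℘ - w₀`, is the limit of `(z - ξ*)·℘'/(℘ - w₀)`.
If `csi ≠ 0` then `℘'(ξ*) = v₀ ≠ 0`, so `n = 1` and the first limit is `csi / v₀`.
If `csi = 0` then `ex = 0` and the cubic becomes `4℘(℘ - w₀)(℘ - w₁)`; comparing orders of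
vanishing in `(℘')² = 4℘(℘ - w₀)(℘ - w₁)` gives `2(n - 1) = n`, i.e. `n = 2`. When also
`ey = 0` the cubic is `4℘³` and the same comparison forces `n = ∞`, i.e. `℘` is constant.
Both cases give `(-1 + t)/2` using only `t² = -3`; part (i) is a polynomial identity modulo
`t² = -3` and `csi² = 48·ex`. -/

open Filter Topology

/-- affix values `℘(ξ^ψ_{j,k})` at the poles of `dlogA` (with `j = i`). -/
noncomputable def wPole (ex ey : ℝ) (k : ℕ) : ℂ :=
  -2 * (ex : ℂ) + (-1)^k * Complex.I * (Real.sqrt 3 : ℂ) * (3 * (ex : ℂ) + 4 * Complex.I * (ey : ℂ))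

/-- values `℘'(ξ^ψ_{j,k})` at the poles of `dlogA` (with `j = i`). -/
noncomputable def vPole (ex ey csi : ℝ) (k : ℕ) : ℂ :=
  (3 - (-1)^k * Complex.I * (Real.sqrt 3 : ℂ)) * (csi : ℂ)
    * (3 * (ex : ℂ) + 4 * Complex.I * (ey : ℂ)) / 2

open Complex

section

variable {𝕜 : Type*} [NontriviallyNormedField 𝕜] {f : 𝕜 → 𝕜} {x : 𝕜}

theorem analyticOrderAt_sub_ne_top_of_not_const {U : Set 𝕜} (hf : AnalyticOnNhd 𝕜 f U)
    (hU : IsPreconnected U) (hx : x ∈ U) (hnc : ¬ ∀ z ∈ U, ∀ w ∈ U, f z = f w) :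
    analyticOrderAt (f · - f x) x ≠ ⊤ := by
  rw [Ne, analyticOrderAt_eq_top]
  intro h
  have hconst := hf.eqOn_of_preconnected_of_eventuallyEq analyticOnNhd_const hU hx
    (h.mono fun z hz => sub_eq_zero.mp hz)
  exact hnc fun z hz w hw => (hconst hz).trans (hconst hw).symm

theorem tendsto_sub_div_sub_of_hasDerivAt {v : 𝕜} (hf : HasDerivAt f v x) (hv : v ≠ 0) :
    Tendsto (fun z => (z - x) / (f z - f x)) (𝓝[≠] x) (𝓝 v⁻¹) := by
  simpa [slope_def_field, inv_div] using (hasDerivAt_iff_tendsto_slope.mp hf).inv₀ hv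

variable [CompleteSpace 𝕜]

theorem tendsto_sub_mul_deriv_div_sub {n : ℕ} (hf : AnalyticAt 𝕜 f x)
    (hn : analyticOrderAt (f · - f x) x = n) :
    Tendsto (fun z => (z - x) * deriv f z / (f z - f x)) (𝓝[≠] x) (𝓝 (n : 𝕜)) := by
  obtain ⟨g, hg, hgx, hfg⟩ := (AnalyticAt.analyticOrderAt_eq_natCast (by fun_prop)).mp hn
  have hderiv : ∀ᶠ z in 𝓝 x,
      (z - x) * deriv f z = (z - x) ^ n * (n * g z + (z - x) * deriv g z) := by
    filter_upwards [hfg.eventually_nhds, hg.eventually_analyticAt] with z hz hgz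
    have hpow : (z - x) * (n * (z - x) ^ (n - 1)) = n * (z - x) ^ n := by
      rcases Nat.eq_zero_or_pos n with rfl | hn
      · simp
      · rw [← mul_pow_sub_one hn.ne' (z - x)]; ring
    have hd : HasDerivAt (fun y => (y - x) ^ n * g y + f x)
        (n * (z - x) ^ (n - 1) * 1 * g z + (z - x) ^ n * deriv g z) z :=
      ((((hasDerivAt_id z).sub_const x).pow n).mul hgz.differentiableAt.hasDerivAt).add_const _
    have hfz : f =ᶠ[𝓝 z] fun y => (y - x) ^ n * g y + f x :=
      hz.mono fun y hy => by rw [smul_eq_mul] at hy; linear_combination hy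
    rw [(hd.congr_of_eventuallyEq hfz).deriv]
    linear_combination g z * hpow
  have hlim :
      Tendsto (fun z => (n * g z + (z - x) * deriv g z) / g z) (𝓝[≠] x) (𝓝 (n : 𝕜)) := by
    have hcont : ContinuousAt (fun z => (n * g z + (z - x) * deriv g z) / g z) x :=
      ((continuousAt_const.mul hg.continuousAt).add
        ((continuousAt_id.sub continuousAt_const).mul hg.deriv.continuousAt)).div
        hg.continuousAt hgx
    simpa [hgx] using hcont.tendsto.mono_left nhdsWithin_le_nhds
  refine hlim.congr' ?_
  filter_upwards [nhdsWithin_le_nhds hderiv, nhdsWithin_le_nhds hfg,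
    nhdsWithin_le_nhds (hg.continuousAt.eventually_ne hgx), self_mem_nhdsWithin]
    with z hd hz hgz hzx
  rw [hd, hz, smul_eq_mul, mul_div_mul_left _ _ (pow_ne_zero _ (sub_ne_zero.mpr hzx))]

variable [CharZero 𝕜]

theorem analyticOrderAt_deriv_sq_add_two (hf : AnalyticAt 𝕜 f x) :
    analyticOrderAt (deriv f ^ 2) x + 2 = 2 * analyticOrderAt (f · - f x) x := by
  rw [← hf.analyticOrderAt_deriv_add_one, analyticOrderAt_pow hf.deriv, nsmul_eq_mul]
  ring

theorem analyticOrderAt_sub_eq_two_of_deriv_sq_eq {h : 𝕜 → 𝕜} (hf : AnalyticAt 𝕜 f x)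
    (hh : AnalyticAt 𝕜 h x) (hhx : h x ≠ 0)
    (hode : deriv f ^ 2 =ᶠ[𝓝 x] fun z => (f z - f x) * h z)
    (hfin : analyticOrderAt (f · - f x) x ≠ ⊤) :
    analyticOrderAt (f · - f x) x = 2 := by
  have key := analyticOrderAt_deriv_sq_add_two hf
  rw [analyticOrderAt_congr hode, show (fun z => (f z - f x) * h z) = (f · - f x) * h from rfl,
    analyticOrderAt_mul (by fun_prop) hh, hh.analyticOrderAt_eq_zero.mpr hhx] at key
  lift analyticOrderAt (f · - f x) x to ℕ using hfin with n
  norm_cast at key ⊢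
  omega

theorem analyticOrderAt_sub_eq_top_of_deriv_sq_eq {h : 𝕜 → 𝕜} (hf : AnalyticAt 𝕜 f x)
    (hh : AnalyticAt 𝕜 h x) (hode : deriv f ^ 2 =ᶠ[𝓝 x] fun z => (f z - f x) ^ 2 * h z) :
    analyticOrderAt (f · - f x) x = ⊤ := by
  have hsub : AnalyticAt 𝕜 (f · - f x) x := by fun_prop
  have key := analyticOrderAt_deriv_sq_add_two hf
  rw [analyticOrderAt_congr hode,
    show (fun z => (f z - f x) ^ 2 * h z) = (f · - f x) ^ 2 * h from rfl,
    analyticOrderAt_mul (hsub.pow 2) hh, analyticOrderAt_pow hsub, nsmul_eq_mul] at key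
  by_contra hfin
  lift analyticOrderAt (f · - f x) x to ℕ using hfin with n
  cases hk : analyticOrderAt h x with
  | top => exact ENat.top_ne_natCast (2 * n) (by simpa [hk] using key)
  | coe k => rw [hk] at key; norm_cast at key; omega

end

theorem neg_one_pow_mul_I_mul_sqrt_three_sq (k : ℕ) :
    ((-1 : ℂ) ^ k * I * (Real.sqrt 3 : ℂ)) ^ 2 = -3 := by
  rw [mul_pow, mul_pow, ← pow_mul, mul_comm k, pow_mul, ← ofReal_pow,
    Real.sq_sqrt zero_le_three]
  simp

theorem sq_eq_cubic_at_pole {e a t c G₂ G₃ : ℂ} (ht : t ^ 2 = -3) (hc : c ^ 2 = 48 * e)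
    (hG₂ : G₂ = 12 * (4 * e ^ 2 + 6 * e * a - a ^ 2))
    (hG₃ : G₃ = 64 * e ^ 3 + 144 * e ^ 2 * a - 24 * e * a ^ 2) :
    ((3 - t) * c * a / 2) ^ 2 = 4 * (-2 * e + t * a) ^ 3 - G₂ * (-2 * e + t * a) - G₃ := by
  subst hG₂ hG₃
  linear_combination ((3 - t) ^ 2 * a ^ 2 / 4) * hc + (36 * e * a ^ 2 - 4 * a ^ 3 * t) * ht

/-- The function `D` of the statement, with `e = ex`, `a = 3·ex + 4i·ey` and `c = csi`. -/
noncomputable def dlogA (e a c : ℂ) (℘ : ℂ → ℂ) (z : ℂ) : ℂ :=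
  c / 2 - (6 * c * a ^ 2 + (℘ z + 2 * e + 3 * a) * deriv ℘ z)
    / (2 * ((℘ z + 2 * e) ^ 2 + 3 * a ^ 2))

section dlogA

variable {℘ : ℂ → ℂ} {ξ e a t c : ℂ}

theorem tendsto_sub_mul_dlogA {X N : ℂ} (ht : t ^ 2 = -3) (ha : a ≠ 0)
    (h℘ : ContinuousAt ℘ ξ) (hw : ℘ ξ = -2 * e + t * a)
    (hX : Tendsto (fun z => c * ((z - ξ) / (℘ z - ℘ ξ))) (𝓝[≠] ξ) (𝓝 X))
    (hN : Tendsto (fun z => (z - ξ) * deriv ℘ z / (℘ z - ℘ ξ)) (𝓝[≠] ξ) (𝓝 N)) :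
    Tendsto (fun z => (z - ξ) * dlogA e a c ℘ z) (𝓝[≠] ξ)
      (𝓝 (-(6 * a ^ 2 * X + (t + 3) * a * N) / (4 * t * a))) := by
  have ht0 : t ≠ 0 := by rintro rfl; norm_num at ht
  have h℘' := h℘.tendsto.mono_left (nhdsWithin_le_nhds (s := {ξ}ᶜ))
  have hlin : Tendsto (fun z => (z - ξ) * (c / 2)) (𝓝[≠] ξ) (𝓝 0) := by
    have : ContinuousAt (fun z => (z - ξ) * (c / 2)) ξ := by fun_prop
    simpa using this.tendsto.mono_left nhdsWithin_le_nhds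
  have hden : 2 * (℘ ξ + (2 * e + t * a)) = 4 * t * a := by rw [hw]; ring
  have hden0 : 4 * t * a ≠ 0 := by simp [ht0, ha]
  have hlim := hlin.sub (((hX.const_mul (6 * a ^ 2)).add
    ((h℘'.add_const (2 * e + 3 * a)).mul hN)).div
    ((h℘'.add_const (2 * e + t * a)).const_mul 2) (hden ▸ hden0))
  rw [hden, show ℘ ξ + (2 * e + 3 * a) = (t + 3) * a by rw [hw]; ring, zero_sub,
    ← neg_div] at hlim
  refine hlim.congr fun z => ?_
  have hfactor :
      (℘ z + 2 * e) ^ 2 + 3 * a ^ 2 = (℘ z - ℘ ξ) * (℘ z + (2 * e + t * a)) := by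
    rw [hw]; linear_combination a ^ 2 * ht
  simp only [dlogA, hfactor, Pi.div_apply, div_eq_mul_inv, mul_inv]
  ring

theorem tendsto_sub_mul_dlogA_of_simple_zero (ht : t ^ 2 = -3) (ha : a ≠ 0) (hc : c ≠ 0)
    (h℘ : AnalyticAt ℂ ℘ ξ) (hw : ℘ ξ = -2 * e + t * a)
    (hv : deriv ℘ ξ = (3 - t) * c * a / 2) :
    Tendsto (fun z => (z - ξ) * dlogA e a c ℘ z) (𝓝[≠] ξ) (𝓝 ((-1 + t) / 2)) := by
  have ht0 : t ≠ 0 := by rintro rfl; norm_num at ht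
  have ht3 : 3 - t ≠ 0 := by
    intro h; rw [← sub_eq_zero.mp h] at ht; norm_num at ht
  have hv0 : deriv ℘ ξ ≠ 0 := by
    rw [hv]; exact div_ne_zero (mul_ne_zero (mul_ne_zero ht3 hc) ha) two_ne_zero
  have hX := (tendsto_sub_div_sub_of_hasDerivAt h℘.differentiableAt.hasDerivAt hv0).const_mul c
  have hord : analyticOrderAt (℘ · - ℘ ξ) ξ = (1 : ℕ) :=
    h℘.analyticOrderAt_sub_eq_one_of_deriv_ne_zero hv0
  convert tendsto_sub_mul_dlogA ht ha h℘.continuousAt hw hX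
    (tendsto_sub_mul_deriv_div_sub h℘ hord) using 2
  rw [hv]
  field_simp
  linear_combination (14 - 4 * t) * ht

theorem tendsto_sub_mul_dlogA_of_double_zero (ht : t ^ 2 = -3) (ha : a ≠ 0)
    (h℘ : AnalyticAt ℂ ℘ ξ) (hw : ℘ ξ = t * a)
    (hode : ∀ᶠ z in 𝓝 ξ, deriv ℘ z ^ 2 = 4 * ℘ z ^ 3 + 12 * a ^ 2 * ℘ z)
    (hfin : analyticOrderAt (℘ · - ℘ ξ) ξ ≠ ⊤) :
    Tendsto (fun z => (z - ξ) * dlogA 0 a 0 ℘ z) (𝓝[≠] ξ) (𝓝 ((-1 + t) / 2)) := by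
  have ht0 : t ≠ 0 := by rintro rfl; norm_num at ht
  have hord : analyticOrderAt (℘ · - ℘ ξ) ξ = (2 : ℕ) := by
    refine analyticOrderAt_sub_eq_two_of_deriv_sq_eq h℘
      (h := fun z => 4 * ℘ z * (℘ z + t * a)) (by fun_prop) ?_ ?_ hfin
    · rw [hw, show 4 * (t * a) * (t * a + t * a) = -24 * a ^ 2 by
        linear_combination 8 * a ^ 2 * ht]
      exact mul_ne_zero (by norm_num) (pow_ne_zero 2 ha)
    · filter_upwards [hode] with z hz
      rw [Pi.pow_apply, hz, hw]
      linear_combination (4 * a ^ 2 * ℘ z) * ht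
  convert tendsto_sub_mul_dlogA (e := 0) (c := 0) (X := 0) ht ha h℘.continuousAt
    (by rw [hw]; ring) (by simp) (tendsto_sub_mul_deriv_div_sub h℘ hord) using 2
  field_simp
  linear_combination 4 * ht

theorem tendsto_sub_mul_dlogA_at_pole {U : Set ℂ} {G₂ G₃ : ℂ} (ht : t ^ 2 = -3)
    (hc : c ^ 2 = 48 * e) (hG₂ : G₂ = 12 * (4 * e ^ 2 + 6 * e * a - a ^ 2))
    (hG₃ : G₃ = 64 * e ^ 3 + 144 * e ^ 2 * a - 24 * e * a ^ 2) (hae : a = 0 → e = 0)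
    (hU : IsOpen U) (hUc : IsPreconnected U) (h℘ : AnalyticOnNhd ℂ ℘ U)
    (hode : ∀ z ∈ U, deriv ℘ z ^ 2 = 4 * ℘ z ^ 3 - G₂ * ℘ z - G₃)
    (hnc : ¬ ∀ z ∈ U, ∀ w ∈ U, ℘ z = ℘ w) (hξ : ξ ∈ U)
    (hw : ℘ ξ = -2 * e + t * a) (hv : deriv ℘ ξ = (3 - t) * c * a / 2) :
    Tendsto (fun z => (z - ξ) * dlogA e a c ℘ z) (𝓝[≠] ξ) (𝓝 ((-1 + t) / 2)) := by
  have h℘ξ := h℘ ξ hξ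
  have hfin := analyticOrderAt_sub_ne_top_of_not_const h℘ hUc hξ hnc
  have hode' : ∀ᶠ z in 𝓝 ξ, deriv ℘ z ^ 2 = 4 * ℘ z ^ 3 - G₂ * ℘ z - G₃ :=
    eventually_of_mem (hU.mem_nhds hξ) hode
  have ha : a ≠ 0 := by
    intro ha0
    obtain rfl := hae ha0
    subst ha0
    refine hfin (analyticOrderAt_sub_eq_top_of_deriv_sq_eq h℘ξ (h := fun z => 4 * ℘ z)
      (by fun_prop) ?_)
    filter_upwards [hode'] with z hz
    rw [Pi.pow_apply, hz, hw, hG₂, hG₃]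
    ring
  rcases eq_or_ne c 0 with rfl | hc0
  · obtain rfl : e = 0 := by simpa [eq_comm] using hc
    refine tendsto_sub_mul_dlogA_of_double_zero ht ha h℘ξ (by rw [hw]; ring) ?_ hfin
    filter_upwards [hode'] with z hz
    rw [hz, hG₂, hG₃]
    ring
  · exact tendsto_sub_mul_dlogA_of_simple_zero ht ha hc0 h℘ξ hw hv

end dlogA

/-- (i) The pairs `(w_k, v_k)`, `k = 0, 1`, lie on the cubic `v² = 4w³ − G₂ w − G₃`;
(ii) at a point `ξ*` where `(℘, ℘') = (w₀, v₀)`, the function `D` (the closed form of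
`dlogA`) has a simple pole with residue `(−1 + i√3)/2`. -/
theorem cgl5_dlogA_poles_and_residue
    (ex ey csi : ℝ) (hcsi : csi^2 = 48 * ex)
    (G₂ G₃ : ℝ)
    (hG₂ : G₂ = 12 * (13 * ex^2 + 16 * ey^2))
    (hG₃ : G₃ = 8 * (35 * ex^2 + 48 * ey^2) * ex) :
    (∀ k : ℕ, k ≤ 1 →
      (vPole ex ey csi k)^2
        = 4 * (wPole ex ey k)^3 - (G₂ : ℂ) * wPole ex ey k - (G₃ : ℂ))
    ∧ (∀ (U : Set ℂ), IsOpen U → IsConnected U →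
       ∀ ℘ : ℂ → ℂ, (∀ z ∈ U, AnalyticAt ℂ ℘ z) →
       (∀ z ∈ U, (deriv ℘ z)^2 = 4 * (℘ z)^3 - (G₂ : ℂ) * ℘ z - (G₃ : ℂ)) →
       (¬ ∀ z ∈ U, ∀ w ∈ U, ℘ z = ℘ w) →
       ∀ ξs ∈ U, ℘ ξs = wPole ex ey 0 → deriv ℘ ξs = vPole ex ey csi 0 →
       ∀ D : ℂ → ℂ,
         (D = fun z => (csi : ℂ) / 2 -
           (6 * (csi : ℂ) * (3 * (ex : ℂ) + 4 * Complex.I * (ey : ℂ))^2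
             + (℘ z + 2 * (ex : ℂ) + 3 * (3 * (ex : ℂ) + 4 * Complex.I * (ey : ℂ)))
                * deriv ℘ z)
           / (2 * ((℘ z + 2 * (ex : ℂ))^2
                + 3 * (3 * (ex : ℂ) + 4 * Complex.I * (ey : ℂ))^2))) →
         Tendsto (fun z => (z - ξs) * D z) (𝓝[≠] ξs)
           (𝓝 ((-1 + Complex.I * (Real.sqrt 3 : ℂ)) / 2))) := by
  have ht : (I * (Real.sqrt 3 : ℂ)) ^ 2 = -3 := by
    simpa using neg_one_pow_mul_I_mul_sqrt_three_sq 0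
  have hc : (csi : ℂ) ^ 2 = 48 * ex := by exact_mod_cast hcsi
  set a : ℂ := 3 * (ex : ℂ) + 4 * I * ey with ha_def
  have hG₂' : (G₂ : ℂ) = 12 * (4 * (ex : ℂ) ^ 2 + 6 * ex * a - a ^ 2) := by
    rw [hG₂, ha_def]; push_cast; linear_combination (192 * (ey : ℂ) ^ 2) * I_sq
  have hG₃' : (G₃ : ℂ) = 64 * (ex : ℂ) ^ 3 + 144 * (ex : ℂ) ^ 2 * a - 24 * ex * a ^ 2 := by
    rw [hG₃, ha_def]; push_cast; linear_combination (384 * (ey : ℂ) ^ 2 * ex) * I_sq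
  refine ⟨fun k _ => sq_eq_cubic_at_pole (neg_one_pow_mul_I_mul_sqrt_three_sq k) hc hG₂' hG₃', ?_⟩
  intro U hU hUc ℘ h℘ hode hnc ξ hξ hw hv D rfl
  simp only [wPole, vPole, pow_zero, one_mul] at hw hv
  refine tendsto_sub_mul_dlogA_at_pole ht hc hG₂' hG₃' (fun ha => ?_) hU hUc.isPreconnected h℘
    hode hnc hξ hw hv
  simpa [ha_def] using congrArg re ha
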